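/- Let n ≥ 4 and let a = Σ_{p≠q} a_{p,q} e_{p,q} ∈ E¹. Suppose there exist ordered pairs (p,q) and (r,s) with p ≠ q, r ≠ s, {p,q} ∩ {r,s} = ∅, a_{p,q} ≠ 0, and a_{r,s} ≠ 0. Then the map ψ_a : I² → E³, x ↦ a·x, is injective, where I² = I ∩ E²; consequently a does not lie in the first resonance variety R¹ of A = E/I. -/

import Mathlib

noncomputable section

open ExteriorAlgebra

/-- Index set for the generators `e_{p,q}`, `p ≠ q`, of the exterior algebra `E`. -/
abbrev RIdx (n : ℕ) := {pq : Fin n × Fin n // pq.1 ≠ pq.2}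

/-- The exterior algebra `E` on the vector space with basis `{e_{p,q} : p ≠ q}`. -/
abbrev Egen (k : Type) [Field k] (n : ℕ) := ExteriorAlgebra k (RIdx n →₀ k)

/-- The degree-one generator `e_{p,q}` of `E`. -/
def egen (k : Type) [Field k] {n : ℕ} (p q : Fin n) (h : p ≠ q) : Egen k n :=
  ExteriorAlgebra.ι k (Finsupp.single (⟨(p, q), h⟩ : RIdx n) (1 : k))

/-- The degree-one generator `e_{p,q}` indexed by an element of `RIdx n`. -/
def egen' (k : Type) [Field k] {n : ℕ} (x : RIdx n) : Egen k n :=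
  ExteriorAlgebra.ι k (Finsupp.single x (1 : k))

/-- The generators `η_{i,j} = e_{i,j} e_{j,i}` (for `i < j`) and
`τ^m_{i,j} = (e_{m,i} - e_{j,i})(e_{m,j} - e_{i,j})` (for `i < j`, `m ∉ {i,j}`)
of the ideal `I`. -/
def resGens (k : Type) [Field k] (n : ℕ) : Set (Egen k n) :=
  {x | ∃ (i j : Fin n) (hij : i < j),
      x = egen k i j hij.ne * egen k j i hij.ne'} ∪
  {x | ∃ (i j m : Fin n) (hij : i < j) (hmi : m ≠ i) (hmj : m ≠ j),
      x = (egen k m i hmi - egen k j i hij.ne') * (egen k m j hmj - egen k i j hij.ne)}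

/-- The two-sided ideal `I` of `E` generated by the `η`'s and `τ`'s. -/
def resIdeal (k : Type) [Field k] (n : ℕ) : TwoSidedIdeal (Egen k n) :=
  TwoSidedIdeal.span (resGens k n)

/-- The quotient algebra `A = E/I`, i.e. `H^*(PΣ_n; k)`. -/
abbrev resA (k : Type) [Field k] (n : ℕ) := (resIdeal k n).ringCon.Quotient

/-- The quotient map `π : E → A = E/I` as a `k`-algebra homomorphism. -/
def resπ (k : Type) [Field k] (n : ℕ) : Egen k n →ₐ[k] resA k n :=
  { (resIdeal k n).ringCon.mk' with commutes' := fun _ => rfl }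

/-- The degree-`m` graded piece `A^m` of `A = E/I`: the image of `E^m = ⋀^m` in `A`. -/
def resAmod (k : Type) [Field k] (n : ℕ) (m : ℕ) : Submodule k (resA k n) :=
  Submodule.map (resπ k n).toLinearMap (⋀[k]^m (RIdx n →₀ k))

/-- The first resonance variety `R¹ = {a ∈ A¹ : H¹(A, δ_a) ≠ 0}`:  `H¹(A,δ_a) ≠ 0` iff some
`x ∈ A¹ = ker(δ_a : A¹ → A²)`-element with `a·x = 0` is not in the image of `δ_a : A⁰ → A¹`. -/
def resR1 (k : Type) [Field k] (n : ℕ) : Set (resA k n) :=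
  {a | a ∈ resAmod k n 1 ∧
    ∃ x ∈ resAmod k n 1, a * x = 0 ∧
      x ∉ Submodule.map (LinearMap.mulLeft k a) (resAmod k n 0)}

/-- The subspace `C_{i,j} = span{e_{i,j}, e_{j,i}}` of `A¹`. -/
def resC2 (k : Type) [Field k] (n : ℕ) (i j : Fin n) (hij : i ≠ j) :
    Submodule k (resA k n) :=
  Submodule.span k {resπ k n (egen k i j hij), resπ k n (egen k j i hij.symm)}

/-- The subspace `C_{i,j,m} = span{e_{j,i} − e_{m,i}, e_{i,j} − e_{m,j}, e_{i,m} − e_{j,m}}`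
of `A¹`. -/
def resC3 (k : Type) [Field k] (n : ℕ) (i j m : Fin n)
    (hij : i ≠ j) (him : i ≠ m) (hjm : j ≠ m) : Submodule k (resA k n) :=
  Submodule.span k {resπ k n (egen k j i hij.symm - egen k m i him.symm),
                    resπ k n (egen k i j hij - egen k m j hjm.symm),
                    resπ k n (egen k i m him - egen k j m hjm)}

/-- The two-sided ideal `I`, viewed as a `k`-subspace of `E`. -/
def resIdealSub (k : Type) [Field k] (n : ℕ) : Submodule k (Egen k n) where
  carrier := resIdeal k n
  add_mem' := (resIdeal k n).add_mem
  zero_mem' := (resIdeal k n).zero_mem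
  smul_mem' c x hx := by
    have h := (resIdeal k n).mul_mem_left (algebraMap k (Egen k n) c) x hx
    simpa [Algebra.smul_def] using h

/-- The degree-two part `I² = I ∩ E²` of the ideal `I`, as a `k`-subspace of `E`. -/
def resI2 (k : Type) [Field k] (n : ℕ) : Submodule k (Egen k n) :=
  resIdealSub k n ⊓ ⋀[k]^2 (RIdx n →₀ k)

/-- The map `ψ_a : I² → E` (with image in `E³` when `a ∈ E¹`), `x ↦ a·x`. -/
def resPsi (k : Type) [Field k] (n : ℕ) (a : Egen k n) : resI2 k n →ₗ[k] Egen k n :=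
  (LinearMap.mulLeft k a).comp (resI2 k n).subtype

end

/-!
Every generator of `I` is a product of two vectors of `E¹`, so `I` is generated in degree two and
`I² = I ∩ E²` is the linear span of the generators. Pairing `E²` with `f ∧ g` for `f, g ∈ (E¹)*`
(contract with `f`, then with `g`), three families of forms vanish on every generator, hence on
`I²`: `e*_{ab} ∧ e*_{cd}` for disjoint `{a,b}`, `{c,d}`; `e*_{ac} ∧ e*_{bc}`; and
`e*_{ab} ∧ (e*_{bc} + e*_{ac})`. If `a·w ∈ I²` with `a, w ∈ E¹`, these say that enough `2 × 2`
minors of the coordinates of `a` and `w` vanish to propagate proportionality from the two disjoint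
edges where `a` is nonzero to every edge, so `w ∈ k·a` and `a·w = 0`.

Contracting with `e*_{p,q}`, where `a_{p,q} ≠ 0`, shows that `a·z = 0` forces `z = a·w` with
`w ∈ E¹`, so `ψ_a` is injective. Likewise `a·x = 0` in `A` with `x ∈ A¹` puts `x` in `k·a`,
the image of `δ_a` on `A⁰`.
-/

namespace DirectSum

variable {R A : Type*} [CommRing R] [Ring A] [Algebra R A] (𝒜 : ℕ → Submodule R A) [GradedAlgebra 𝒜]

theorem coe_decompose_mul_mul_of_mem {d : ℕ} {g : A} (hg : g ∈ 𝒜 d) (z w : A) :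
    (decompose 𝒜 (z * g * w) d : A) = decompose 𝒜 z 0 * g * decompose 𝒜 w 0 := by
  induction w using DirectSum.Decomposition.inductionOn 𝒜 with
  | zero => simp
  | add w₁ w₂ h₁ h₂ =>
    simp only [mul_add, decompose_add, DirectSum.add_apply, Submodule.coe_add, h₁, h₂]
  | @homogeneous j w =>
    obtain rfl | hj := eq_or_ne j 0
    · rw [coe_decompose_mul_of_right_mem_zero 𝒜 w.2, decompose_coe, of_eq_same,
        ← coe_decompose_mul_add_of_right_mem 𝒜 hg, zero_add]
    · rw [decompose_of_mem_ne 𝒜 w.2 hj, mul_zero]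
      by_cases hjd : j ≤ d
      · rw [coe_decompose_mul_of_right_mem_of_le 𝒜 w.2 hjd,
          coe_decompose_mul_of_right_mem_of_not_le 𝒜 hg (by omega), zero_mul]
      · exact coe_decompose_mul_of_right_mem_of_not_le 𝒜 w.2 hjd

end DirectSum

open DirectSum in
open scoped Pointwise in
theorem TwoSidedIdeal.mem_submoduleSpan_of_mem_grade {R A : Type*} [CommRing R] [Ring A]
    [Algebra R A] {𝒜 : ℕ → Submodule R A} [GradedAlgebra 𝒜] (h𝒜 : 𝒜 0 ≤ 1) {d : ℕ} {S : Set A}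
    (hS : S ⊆ 𝒜 d) {x : A} (hx : x ∈ TwoSidedIdeal.span S) (hxd : x ∈ 𝒜 d) :
    x ∈ Submodule.span R S := by
  have hproj : AddSubgroup.closure ((Set.univ : Set A) * S * Set.univ) ≤
      ((Submodule.span R S).comap (GradedAlgebra.proj 𝒜 d)).toAddSubgroup := by
    rw [AddSubgroup.closure_le]
    rintro _ ⟨_, ⟨z, -, g, hg, rfl⟩, w, -, rfl⟩
    obtain ⟨a, ha⟩ := Submodule.mem_one.mp (h𝒜 (decompose 𝒜 z 0).2)
    obtain ⟨b, hb⟩ := Submodule.mem_one.mp (h𝒜 (decompose 𝒜 w 0).2)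
    rw [SetLike.mem_coe, Submodule.mem_toAddSubgroup, Submodule.mem_comap,
      GradedAlgebra.proj_apply, coe_decompose_mul_mul_of_mem 𝒜 (hS hg), ← ha, ← hb,
      ← Algebra.smul_def, ← Algebra.commutes, ← Algebra.smul_def]
    exact Submodule.smul_mem _ _ (Submodule.smul_mem _ _ (Submodule.subset_span hg))
  have := hproj (mem_span_iff_mem_addSubgroup_closure.mp hx)
  rwa [Submodule.mem_toAddSubgroup, Submodule.mem_comap,
    GradedAlgebra.proj_apply, decompose_of_mem_same 𝒜 hxd] at this

namespace ExteriorAlgebra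

variable {R M : Type*} [CommRing R] [AddCommGroup M] [Module R M]

theorem contractLeft_mem_exteriorPower (d : Module.Dual R M) {i : ℕ} {x : ExteriorAlgebra R M}
    (hx : x ∈ ⋀[R]^(i + 1) M) : CliffordAlgebra.contractLeft (Q := 0) d x ∈ ⋀[R]^i M := by
  induction i generalizing x with
  | zero =>
    obtain ⟨u, rfl⟩ := (pow_one (LinearMap.range (ι R (M := M)))).le hx
    rw [CliffordAlgebra.contractLeft_ι, exteriorPower, pow_zero]
    exact Submodule.algebraMap_mem _
  | succ i ih =>
    rw [exteriorPower, pow_succ'] at hx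
    induction hx using Submodule.mul_induction_on' with
    | mem_mul_mem m hm y hy =>
      obtain ⟨u, rfl⟩ := hm
      rw [CliffordAlgebra.contractLeft_ι_mul]
      exact Submodule.sub_mem _ (Submodule.smul_mem _ _ hy)
        ((pow_succ' (LinearMap.range (ι R (M := M))) i).ge
          (Submodule.mul_mem_mul (LinearMap.mem_range_self _ u) (ih hy)))
    | add x _ y _ hx hy => rw [map_add]; exact Submodule.add_mem _ hx hy

theorem exists_eq_ι_mul_of_ι_mul_eq_zero {K : Type*} [Field K] [Module K M] (d : Module.Dual K M)
    {v : M} (hv : d v ≠ 0) {i : ℕ} {z : ExteriorAlgebra K M} (hz : z ∈ ⋀[K]^(i + 1) M)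
    (h : ι K v * z = 0) : ∃ y ∈ ⋀[K]^i M, z = ι K v * y := by
  refine ⟨(d v)⁻¹ • CliffordAlgebra.contractLeft (Q := 0) d z,
    Submodule.smul_mem _ _ (contractLeft_mem_exteriorPower d hz), ?_⟩
  have hcontract := congrArg (CliffordAlgebra.contractLeft (Q := 0) d) h
  rw [CliffordAlgebra.contractLeft_ι_mul, map_zero, sub_eq_zero] at hcontract
  rw [mul_smul_comm, ← hcontract, inv_smul_smul₀ hv]

theorem ι_mul_ι_mem_exteriorPower_two (u w : M) : ι R u * ι R w ∈ ⋀[R]^2 M :=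
  (pow_two (LinearMap.range (ι R (M := M)))).ge
    (Submodule.mul_mem_mul (LinearMap.mem_range_self _ u) (LinearMap.mem_range_self _ w))

def wedgePairing (f g : Module.Dual R M) : ExteriorAlgebra R M →ₗ[R] R :=
  algebraMapInv.toLinearMap ∘ₗ CliffordAlgebra.contractLeft (Q := 0) g ∘ₗ
    CliffordAlgebra.contractLeft (Q := 0) f

theorem wedgePairing_ι_mul_ι (f g : Module.Dual R M) (u w : M) :
    wedgePairing f g (ι R u * ι R w) = f u * g w - f w * g u := by
  rw [wedgePairing, LinearMap.comp_apply, LinearMap.comp_apply, CliffordAlgebra.contractLeft_ι_mul,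
    CliffordAlgebra.contractLeft_ι, map_sub, map_smul, CliffordAlgebra.contractLeft_ι,
    CliffordAlgebra.contractLeft_ι_mul, CliffordAlgebra.contractLeft_algebraMap, mul_zero,
    sub_zero, Algebra.smul_def, Algebra.smul_def, ← map_mul, ← map_mul, ← map_sub,
    AlgHom.toLinearMap_apply, algebraMap_leftInverse, mul_comm (g u)]

end ExteriorAlgebra

section MinorRelations

variable {α K : Type*} [Field K] {V W : α → α → K} {t : K}

theorem eq_mul_of_path_relations {p q r s : α} (hpq : p ≠ q) (hpr : p ≠ r) (hps : p ≠ s)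
    (hqr : q ≠ r) (hrs : r ≠ s) (hVpq : V p q ≠ 0) (hVrs : V r s ≠ 0)
    (hpath : ∀ a b c, a ≠ b → b ≠ c → a ≠ c → V a b * (W b c + W a c) = W a b * (V b c + V a c))
    (tpq : W p q = t * V p q) (trs : W r s = t * V r s) (tps : W p s = t * V p s)
    (tsr : W s r = t * V s r) :
    W p r = t * V p r ∧ W q r = t * V q r := by
  have h₁ := hpath p s r hps hrs.symm hpr
  have h₂ := hpath p r s hpr hrs hps
  have h₃ := hpath p q r hpq hqr hpr
  have tpr : W p r = t * V p r := mul_left_cancel₀ hVrs <| by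
    linear_combination -h₁ - h₂ + V p r * trs + V p s * tsr - V s r * tps
  exact ⟨tpr, mul_left_cancel₀ hVpq <| by
    linear_combination h₃ - V p q * tpr + (V q r + V p r) * tpq⟩

theorem exists_eq_mul_of_minor_relations {p q r s : α} (hpq : p ≠ q) (hrs : r ≠ s) (hpr : p ≠ r)
    (hps : p ≠ s) (hqr : q ≠ r) (hqs : q ≠ s) (hVpq : V p q ≠ 0) (hVrs : V r s ≠ 0)
    (hdisj : ∀ a b c d, a ≠ b → c ≠ d → a ≠ c → a ≠ d → b ≠ c → b ≠ d →
      V a b * W c d = W a b * V c d)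
    (htgt : ∀ a b c, a ≠ c → b ≠ c → a ≠ b → V a c * W b c = W a c * V b c)
    (hpath : ∀ a b c, a ≠ b → b ≠ c → a ≠ c →
      V a b * (W b c + W a c) = W a b * (V b c + V a c)) :
    ∃ t, ∀ a b, a ≠ b → W a b = t * V a b := by
  set t := W p q / V p q
  have tpq : W p q = t * V p q := (div_mul_cancel₀ _ hVpq).symm
  have spread : ∀ {a b c d}, V a b ≠ 0 → W a b = t * V a b → V a b * W c d = W a b * V c d →
      W c d = t * V c d :=
    fun hV ht h => mul_left_cancel₀ hV (by rw [h, ht]; ring)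
  have avoid_pq : ∀ a b, a ≠ b → p ≠ a → p ≠ b → q ≠ a → q ≠ b → W a b = t * V a b :=
    fun a b hab h₁ h₂ h₃ h₄ => spread hVpq tpq (hdisj p q a b hpq hab h₁ h₂ h₃ h₄)
  have trs := avoid_pq r s hrs hpr hps hqr hqs
  have avoid_rs : ∀ a b, a ≠ b → r ≠ a → r ≠ b → s ≠ a → s ≠ b → W a b = t * V a b :=
    fun a b hab h₁ h₂ h₃ h₄ => spread hVrs trs (hdisj r s a b hrs hab h₁ h₂ h₃ h₄)
  have into_q : ∀ a, a ≠ q → W a q = t * V a q := fun a haq => by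
    obtain rfl | hpa := eq_or_ne p a
    · exact tpq
    · exact spread hVpq tpq (htgt p a q hpq haq hpa)
  have into_s : ∀ a, a ≠ s → W a s = t * V a s := fun a has => by
    obtain rfl | hra := eq_or_ne r a
    · exact trs
    · exact spread hVrs trs (htgt r a s hrs has hra)
  obtain ⟨tpr, tqr⟩ := eq_mul_of_path_relations hpq hpr hps hqr hrs hVpq hVrs hpath tpq trs
    (into_s p hps) (avoid_pq s r hrs.symm hps hpr hqs hqr)
  obtain ⟨trp, tsp⟩ := eq_mul_of_path_relations hrs hpr.symm hqr.symm hps.symm hpq hVrs hVpq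
    hpath trs tpq (into_q r hqr.symm) (avoid_rs q p hpq.symm hqr.symm hpr.symm hqs.symm hps.symm)
  -- The edges meeting both `{p, q}` and `{r, s}` end in `q` or `s`, or are `pr, qr, rp, sp`.
  refine ⟨t, fun a b hab => ?_⟩
  obtain rfl | hbq := eq_or_ne b q
  · exact into_q a hab
  obtain rfl | hbs := eq_or_ne b s
  · exact into_s a hab
  obtain rfl | hbp := eq_or_ne b p
  · obtain rfl | har := eq_or_ne a r
    · exact trp
    obtain rfl | has := eq_or_ne a s
    · exact tsp
    exact avoid_rs a b hab har.symm hpr.symm has.symm hps.symm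
  obtain rfl | hbr := eq_or_ne b r
  · obtain rfl | hap := eq_or_ne a p
    · exact tpr
    obtain rfl | haq := eq_or_ne a q
    · exact tqr
    exact avoid_pq a b hab hap.symm hpr haq.symm hqr
  by_cases ha : a = p ∨ a = q
  · obtain rfl | rfl := ha
    · exact avoid_rs a b hab hpr.symm hbr.symm hps.symm hbs.symm
    · exact avoid_rs a b hab hqr.symm hbr.symm hqs.symm hbs.symm
  · obtain ⟨hap, haq⟩ := not_or.mp ha
    exact avoid_pq a b hab (Ne.symm hap) hbp.symm (Ne.symm haq) hbq.symm

end MinorRelations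

open ExteriorAlgebra

noncomputable section

variable {k : Type} [Field k] {n : ℕ}

variable (k) in
/-- The coordinate of the edge `(a, b)`, extended by `0` to the diagonal so that no proof of
`a ≠ b` is needed to mention it. -/
def edgeCoord (a b : Fin n) : Module.Dual k (RIdx n →₀ k) :=
  if h : a ≠ b then Finsupp.lapply ⟨(a, b), h⟩ else 0

theorem edgeCoord_apply {a b : Fin n} (h : a ≠ b) (u : RIdx n →₀ k) :
    edgeCoord k a b u = u ⟨(a, b), h⟩ := by
  simp [edgeCoord, h]

theorem edgeCoord_single (a b i j : Fin n) (h : i ≠ j) :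
    edgeCoord k a b (Finsupp.single ⟨(i, j), h⟩ 1) = if a = i ∧ b = j then 1 else 0 := by
  by_cases hab : a = b
  · subst hab
    simp only [edgeCoord, ne_eq, not_true_eq_false, dite_false, LinearMap.zero_apply]
    split_ifs with h'
    · exact absurd (h'.1.symm.trans h'.2) h
    · rfl
  · rw [edgeCoord_apply hab, Finsupp.single_apply]
    simp [Subtype.ext_iff, Prod.ext_iff, eq_comm]

theorem egen_eq (i j : Fin n) (h : i ≠ j) :
    egen k i j h = ι k (Finsupp.single ⟨(i, j), h⟩ 1) := rfl

theorem wedgePairing_edgeCoord_of_disjoint {g : Egen k n} (hg : g ∈ resGens k n) {a b c d : Fin n}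
    (hac : a ≠ c) (had : a ≠ d) (hbc : b ≠ c) (hbd : b ≠ d) :
    wedgePairing (edgeCoord k a b) (edgeCoord k c d) g = 0 := by
  rcases hg with ⟨i, j, hij, rfl⟩ | ⟨i, j, m, hij, hmi, hmj, rfl⟩ <;>
  simp only [egen_eq, ← map_sub, wedgePairing_ι_mul_ι] <;>
  simp only [map_sub, edgeCoord_single] <;>
  grind

theorem wedgePairing_edgeCoord_of_target {g : Egen k n} (hg : g ∈ resGens k n) {a b c : Fin n}
    (hab : a ≠ b) :
    wedgePairing (edgeCoord k a c) (edgeCoord k b c) g = 0 := by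
  rcases hg with ⟨i, j, hij, rfl⟩ | ⟨i, j, m, hij, hmi, hmj, rfl⟩ <;>
  simp only [egen_eq, ← map_sub, wedgePairing_ι_mul_ι] <;>
  simp only [map_sub, edgeCoord_single] <;>
  grind

theorem wedgePairing_edgeCoord_path {g : Egen k n} (hg : g ∈ resGens k n) {a b c : Fin n}
    (hac : a ≠ c) :
    wedgePairing (edgeCoord k a b) (edgeCoord k b c) g +
      wedgePairing (edgeCoord k a b) (edgeCoord k a c) g = 0 := by
  rcases hg with ⟨i, j, hij, rfl⟩ | ⟨i, j, m, hij, hmi, hmj, rfl⟩ <;>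
  simp only [egen_eq, ← map_sub, wedgePairing_ι_mul_ι] <;>
  simp only [map_sub, edgeCoord_single] <;>
  grind

theorem resGens_subset_exteriorPower_two : resGens k n ⊆ ⋀[k]^2 (RIdx n →₀ k) := by
  rintro _ (⟨i, j, hij, rfl⟩ | ⟨i, j, m, hij, hmi, hmj, rfl⟩)
  · exact ι_mul_ι_mem_exteriorPower_two _ _
  · simp only [egen_eq, ← map_sub]
    exact ι_mul_ι_mem_exteriorPower_two _ _

theorem resI2_le_span_resGens : resI2 k n ≤ Submodule.span k (resGens k n) :=
  fun _ hx => TwoSidedIdeal.mem_submoduleSpan_of_mem_grade (𝒜 := fun i => ⋀[k]^i (RIdx n →₀ k))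
    (pow_zero _).le resGens_subset_exteriorPower_two hx.1 hx.2

theorem resπ_eq_zero_iff {y : Egen k n} : resπ k n y = 0 ↔ y ∈ resIdeal k n :=
  (RingCon.eq (resIdeal k n).ringCon).trans ((resIdeal k n).mem_iff y).symm

theorem exists_eq_smul_of_ι_mul_ι_mem_span {v w : RIdx n →₀ k} (x y : RIdx n)
    (hdisj : Disjoint ({x.1.1, x.1.2} : Finset (Fin n)) ({y.1.1, y.1.2} : Finset (Fin n)))
    (hx : v x ≠ 0) (hy : v y ≠ 0) (hvw : ι k v * ι k w ∈ Submodule.span k (resGens k n)) :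
    ∃ t : k, w = t • v := by
  obtain ⟨⟨p, q⟩, hpq⟩ := x
  obtain ⟨⟨r, s⟩, hrs⟩ := y
  simp only [Finset.disjoint_insert_left, Finset.disjoint_singleton_left, Finset.mem_insert,
    Finset.mem_singleton, not_or] at hdisj
  obtain ⟨⟨hpr, hps⟩, hqr, hqs⟩ := hdisj
  have vanish : ∀ φ : Egen k n →ₗ[k] k, (∀ g ∈ resGens k n, φ g = 0) → φ (ι k v * ι k w) = 0 :=
    fun φ hφ => (Submodule.span_le (p := LinearMap.ker φ)).2 hφ hvw
  obtain ⟨t, ht⟩ := exists_eq_mul_of_minor_relations (V := fun a b => edgeCoord k a b v)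
    (W := fun a b => edgeCoord k a b w) hpq hrs hpr hps hqr hqs
    (by rwa [edgeCoord_apply hpq]) (by rwa [edgeCoord_apply hrs])
    (fun a b c d _ _ hac had hbc hbd => sub_eq_zero.mp <| by
      rw [← wedgePairing_ι_mul_ι]
      exact vanish _ fun g hg => wedgePairing_edgeCoord_of_disjoint hg hac had hbc hbd)
    (fun a b c _ _ hab => sub_eq_zero.mp <| by
      rw [← wedgePairing_ι_mul_ι]
      exact vanish _ fun g hg => wedgePairing_edgeCoord_of_target hg hab)
    (fun a b c _ _ hac => by
      have := vanish (wedgePairing (edgeCoord k a b) (edgeCoord k b c) +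
        wedgePairing (edgeCoord k a b) (edgeCoord k a c))
        fun g hg => wedgePairing_edgeCoord_path hg hac
      rw [LinearMap.add_apply, wedgePairing_ι_mul_ι, wedgePairing_ι_mul_ι] at this
      linear_combination this)
  refine ⟨t, Finsupp.ext fun ⟨⟨a, b⟩, hab⟩ => ?_⟩
  simpa [edgeCoord_apply hab] using ht a b hab

end

theorem case1_psi_injective_general
    (k : Type) [Field k] (n : ℕ)
    (v : RIdx n →₀ k) (x y : RIdx n)
    (hdisj : Disjoint ({x.1.1, x.1.2} : Finset (Fin n)) ({y.1.1, y.1.2} : Finset (Fin n)))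
    (hx : v x ≠ 0) (hy : v y ≠ 0) :
    Function.Injective (resPsi k n (ExteriorAlgebra.ι k v)) ∧
    resπ k n (ExteriorAlgebra.ι k v) ∉ resR1 k n := by
  have parallel : ∀ w, ι k v * ι k w ∈ resIdeal k n → ∃ t : k, w = t • v := fun w hw =>
    exists_eq_smul_of_ι_mul_ι_mem_span x y hdisj hx hy
      (resI2_le_span_resGens ⟨hw, ι_mul_ι_mem_exteriorPower_two v w⟩)
  constructor
  · refine (injective_iff_map_eq_zero _).2 fun ⟨z, hzI, hz2⟩ hz => ?_
    obtain ⟨_, hu, rfl⟩ := exists_eq_ι_mul_of_ι_mul_eq_zero (Finsupp.lapply x) hx hz2 hz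
    obtain ⟨u, rfl⟩ := (pow_one (LinearMap.range (ι k (M := RIdx n →₀ k)))).le hu
    obtain ⟨t, rfl⟩ := parallel u hzI
    ext
    simp [map_smul]
  · rintro ⟨-, _, ⟨_, hw1, rfl⟩, hvw, hw⟩
    obtain ⟨w, rfl⟩ := (pow_one (LinearMap.range (ι k (M := RIdx n →₀ k)))).le hw1
    obtain ⟨t, rfl⟩ := parallel w (resπ_eq_zero_iff.1 (by rwa [map_mul]))
    refine hw ⟨algebraMap k _ t, ⟨algebraMap k _ t, Submodule.algebraMap_mem t, rfl⟩, ?_⟩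
    simp [map_smul, Algebra.smul_def, Algebra.commutes]

/-- **Case 1.** For `n ≥ 4`, if `a = Σ a_{p,q} e_{p,q} ∈ E¹` has `a_{p,q} ≠ 0` and
`a_{r,s} ≠ 0` for some ordered pairs with `{p,q} ∩ {r,s} = ∅`, then `ψ_a : I² → E³` is
injective; consequently `a ∉ R¹`. -/
theorem case1_psi_injective
    (k : Type) [Field k] [IsAlgClosed k] [CharZero k] (n : ℕ) (hn : 4 ≤ n)
    (v : RIdx n →₀ k) (x y : RIdx n)
    (hdisj : Disjoint ({x.1.1, x.1.2} : Finset (Fin n)) ({y.1.1, y.1.2} : Finset (Fin n)))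
    (hx : v x ≠ 0) (hy : v y ≠ 0) :
    Function.Injective (resPsi k n (ExteriorAlgebra.ι k v)) ∧
    resπ k n (ExteriorAlgebra.ι k v) ∉ resR1 k n :=
  case1_psi_injective_general k n v x y hdisj hx hy
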